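/- Assume ∫_{−∞}^∞ q(t) dt = ∞ and d₀ := sup_{x∈ℝ} d(x) < ∞. Then for every λ ∈ (0,∞) and every x ∈ ℝ: ∫_x^∞ exp(−∫_x^t (q(ξ) + λ) dξ) dt ≤ ( λ + e^{−2−2λd₀} d₀^{−1} )^{−1}; in particular sup_{x∈ℝ} ∫_x^∞ exp(−∫_x^t (q(ξ) + λ) dξ) dt < 1/λ. -/

import Mathlib

/-!
Each window `[y - d(y), y + d(y)]` carries `q`-mass `2` and has length at most `2 d₀`, so every
interval of length `2 d₀` carries `q`-mass at least `2`. Hence the integrand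
`f t = exp (-∫_x^t (q + λ))` satisfies `f (t + 2 d₀) ≤ e^{-2-2λd₀} f t`, and splitting `∫_x^∞ f`
at `x + 2 d₀`, with `f t ≤ e^{-λ(t-x)}` on the first period, gives
`∫_x^∞ f ≤ (1 - e^{-2λd₀}) / (λ (1 - e^{-2-2λd₀}))`. The elementary estimates `1 - e^{-u} ≤ u`
and `e² ≥ 3` bound this by `(λ + e^{-2-2λd₀} / d₀)⁻¹`.
-/

open MeasureTheory Filter Topology
open scoped ENNReal

/-- The function `d(x) = inf { d > 0 : ∫_{x-d}^{x+d} q = 2 }`. -/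
noncomputable def dq (q : ℝ → ℝ) (x : ℝ) : ℝ :=
  sInf {d : ℝ | 0 < d ∧ ∫ t in x - d..x + d, q t = 2}

open Set

lemma MeasureTheory.LocallyIntegrable.intervalIntegrable {q : ℝ → ℝ}
    (hq : LocallyIntegrable q volume) (a b : ℝ) : IntervalIntegrable q volume a b :=
  (hq.integrableOn_isCompact isCompact_uIcc).intervalIntegrable

lemma setLIntegral_Ioi_le_of_shift_le {f : ℝ → ℝ≥0∞} {x c : ℝ} {r : ℝ≥0∞} (hc : 0 ≤ c)
    (hr : r < 1) (hshift : ∀ t > x, f (t + c) ≤ r * f t) (hfin : ∫⁻ t in Ioi x, f t ≠ ⊤) :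
    ∫⁻ t in Ioi x, f t ≤ (1 - r)⁻¹ * ∫⁻ t in Ioc x (x + c), f t := by
  have htail : ∫⁻ t in Ioi (x + c), f t = ∫⁻ t in Ioi x, f (t + c) := by
    rw [← (measurePreserving_add_right volume c).setLIntegral_comp_preimage_emb
      (measurableEmbedding_addRight c), preimage_add_const_Ioi, add_sub_cancel_right]
  have hrec : ∫⁻ t in Ioi x, f t ≤ (∫⁻ t in Ioc x (x + c), f t) + r * ∫⁻ t in Ioi x, f t :=
    calc ∫⁻ t in Ioi x, f t = (∫⁻ t in Ioc x (x + c), f t) + ∫⁻ t in Ioi (x + c), f t := by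
          rw [← lintegral_union measurableSet_Ioi Ioc_disjoint_Ioi_same,
            Ioc_union_Ioi_eq_Ioi (le_add_of_nonneg_right hc)]
      _ ≤ (∫⁻ t in Ioc x (x + c), f t) + ∫⁻ t in Ioi x, r * f t := by
          rw [htail]
          exact add_le_add_right (setLIntegral_mono' measurableSet_Ioi hshift) _
      _ = _ := by rw [lintegral_const_mul' r f (hr.trans ENNReal.one_lt_top).ne]
  rw [← ENNReal.mul_le_iff_le_inv (tsub_pos_of_lt hr).ne' (by simp),
    ENNReal.sub_mul fun _ _ => hfin, one_mul]
  exact tsub_le_iff_right.2 hrec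

lemma integral_exp_neg_mul_sub (lam x c : ℝ) (hlam : lam ≠ 0) :
    ∫ t in x..x + c, Real.exp (-(lam * (t - x))) = (1 - Real.exp (-(lam * c))) / lam := by
  rw [intervalIntegral.integral_comp_sub_right (fun t => Real.exp (-(lam * t)))]
  simp only [sub_self, add_sub_cancel_left, ← neg_mul]
  rw [intervalIntegral.integral_comp_mul_left (fun t => Real.exp t) (neg_ne_zero.2 hlam),
    integral_exp, mul_zero, Real.exp_zero, smul_eq_mul]
  field_simp
  ring

lemma integrableOn_exp_neg_mul_sub_Ioi {lam : ℝ} (hlam : 0 < lam) (x : ℝ) :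
    IntegrableOn (fun t => Real.exp (-(lam * (t - x)))) (Ioi x) := by
  refine IntegrableOn.congr_fun ((exp_neg_integrableOn_Ioi x hlam).const_mul
    (Real.exp (lam * x))) (fun t _ => ?_) measurableSet_Ioi
  rw [← Real.exp_add]
  ring_nf

lemma lintegral_exp_neg_integral_le {p : ℝ → ℝ} (hp : LocallyIntegrable p volume)
    {lam b c : ℝ} (hlam : 0 < lam) (hb : 0 < b) (hc : 0 ≤ c) (hp_ge : ∀ t, lam ≤ p t)
    (hp_period : ∀ t, b ≤ ∫ s in t..t + c, p s) (x : ℝ) :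
    ∫⁻ t in Ioi x, ENNReal.ofReal (Real.exp (-∫ s in x..t, p s)) ≤
      ENNReal.ofReal ((1 - Real.exp (-(lam * c))) / (lam * (1 - Real.exp (-b)))) := by
  have hdom : ∀ t ∈ Ioi x, ENNReal.ofReal (Real.exp (-∫ s in x..t, p s)) ≤
      ENNReal.ofReal (Real.exp (-(lam * (t - x)))) := by
    intro t ht
    have h := intervalIntegral.integral_mono_on ht.le intervalIntegrable_const
      (hp.intervalIntegrable x t) fun s _ => hp_ge s
    rw [intervalIntegral.integral_const, smul_eq_mul, mul_comm] at h
    gcongr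
  have hshift : ∀ t > x, ENNReal.ofReal (Real.exp (-∫ s in x..t + c, p s)) ≤
      ENNReal.ofReal (Real.exp (-b)) * ENNReal.ofReal (Real.exp (-∫ s in x..t, p s)) := by
    intro t _
    rw [← ENNReal.ofReal_mul (Real.exp_pos _).le, ← Real.exp_add,
      ← intervalIntegral.integral_add_adjacent_intervals (hp.intervalIntegrable x t)
        (hp.intervalIntegrable t (t + c))]
    gcongr
    linarith [hp_period t]
  have hfin : ∫⁻ t in Ioi x, ENNReal.ofReal (Real.exp (-∫ s in x..t, p s)) ≠ ⊤ :=
    ne_top_of_le_ne_top (integrableOn_exp_neg_mul_sub_Ioi hlam x).lintegral_lt_top.ne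
      (setLIntegral_mono' measurableSet_Ioi hdom)
  have hfirst : ∫⁻ t in Ioc x (x + c), ENNReal.ofReal (Real.exp (-∫ s in x..t, p s)) ≤
      ENNReal.ofReal ((1 - Real.exp (-(lam * c))) / lam) :=
    calc _ ≤ ∫⁻ t in Ioc x (x + c), ENNReal.ofReal (Real.exp (-(lam * (t - x)))) :=
          setLIntegral_mono' measurableSet_Ioc fun t ht => hdom t ht.1
      _ = ENNReal.ofReal (∫ t in Ioc x (x + c), Real.exp (-(lam * (t - x)))) :=
          (ofReal_integral_eq_lintegral_ofReal
            ((integrableOn_exp_neg_mul_sub_Ioi hlam x).mono_set Ioc_subset_Ioi_self)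
            (.of_forall fun _ => (Real.exp_pos _).le)).symm
      _ = _ := by
          rw [← intervalIntegral.integral_of_le (le_add_of_nonneg_right hc),
            integral_exp_neg_mul_sub _ _ _ hlam.ne']
  have hr : Real.exp (-b) < 1 := Real.exp_lt_one_iff.2 (neg_lt_zero.2 hb)
  calc _ ≤ (1 - ENNReal.ofReal (Real.exp (-b)))⁻¹ *
        ∫⁻ t in Ioc x (x + c), ENNReal.ofReal (Real.exp (-∫ s in x..t, p s)) :=
        setLIntegral_Ioi_le_of_shift_le hc (ENNReal.ofReal_lt_one.2 hr) hshift hfin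
    _ ≤ (1 - ENNReal.ofReal (Real.exp (-b)))⁻¹ *
        ENNReal.ofReal ((1 - Real.exp (-(lam * c))) / lam) := by gcongr
    _ = _ := by
        rw [← ENNReal.ofReal_one, ← ENNReal.ofReal_sub _ (Real.exp_pos _).le,
          ← ENNReal.ofReal_inv_of_pos (sub_pos.2 hr), ← ENNReal.ofReal_mul (by simpa using hr.le)]
        congr 1
        field_simp

section

variable {q : ℝ → ℝ}

lemma continuous_integral_centered (hq : LocallyIntegrable q volume) (x : ℝ) :
    Continuous fun d : ℝ => ∫ t in x - d..x + d, q t := by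
  have hF := intervalIntegral.continuous_primitive hq.intervalIntegrable 0
  have h : (fun d : ℝ => ∫ t in x - d..x + d, q t) =
      fun d => (∫ t in (0 : ℝ)..x + d, q t) - ∫ t in (0 : ℝ)..x - d, q t := by
    ext d
    rw [intervalIntegral.integral_interval_sub_left (hq.intervalIntegrable _ _)
      (hq.intervalIntegrable _ _)]
  rw [h]
  exact (hF.comp (continuous_const_add x)).sub (hF.comp (continuous_const.sub continuous_id))

lemma exists_lt_integral_centered (hq₀ : ∀ t, 0 ≤ q t) (hq : LocallyIntegrable q volume)
    (hq_top : ∫⁻ t, ENNReal.ofReal (q t) = ⊤) (x c : ℝ) :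
    ∃ d, 0 ≤ d ∧ c < ∫ t in x - d..x + d, q t := by
  have hleft : Tendsto (fun d : ℝ => x - d) atTop atBot := by
    simpa only [sub_eq_add_neg] using tendsto_atBot_add_const_left atTop x tendsto_neg_atTop_atBot
  have hcover : AECover volume atTop fun d : ℝ => Icc (x - d) (x + d) :=
    aecover_Icc hleft (tendsto_atTop_add_const_left atTop x tendsto_id)
  have hlim := hcover.lintegral_tendsto_of_countably_generated
    (hq.aestronglyMeasurable.aemeasurable.ennreal_ofReal)
  rw [hq_top] at hlim
  obtain ⟨d, hcd, hd⟩ := ((hlim.eventually_const_lt (ENNReal.ofReal_lt_top (r := c))).and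
    (eventually_ge_atTop 0)).exists
  refine ⟨d, hd, ?_⟩
  have hxd : x - d ≤ x + d := by linarith
  rw [← ofReal_integral_eq_lintegral_ofReal (hq.integrableOn_isCompact isCompact_Icc)
    (.of_forall hq₀), integral_Icc_eq_integral_Ioc, ← intervalIntegral.integral_of_le hxd,
    ENNReal.ofReal_lt_ofReal_iff'] at hcd
  exact hcd.1

lemma exists_pos_integral_centered_eq (hq₀ : ∀ t, 0 ≤ q t) (hq : LocallyIntegrable q volume)
    (hq_top : ∫⁻ t, ENNReal.ofReal (q t) = ⊤) (x : ℝ) {c : ℝ} (hc : 0 < c) :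
    ∃ d, 0 < d ∧ ∫ t in x - d..x + d, q t = c := by
  obtain ⟨D, hD, hcD⟩ := exists_lt_integral_centered hq₀ hq hq_top x c
  obtain ⟨d, hd, hdc⟩ := intermediate_value_Icc hD (continuous_integral_centered hq x).continuousOn
    ⟨by simpa using hc.le, hcD.le⟩
  refine ⟨d, hd.1.lt_of_ne ?_, hdc⟩
  rintro rfl
  simp only [sub_zero, add_zero, intervalIntegral.integral_same] at hdc
  exact hc.ne hdc

lemma dq_pos_and_integral_eq (hq₀ : ∀ t, 0 ≤ q t) (hq : LocallyIntegrable q volume)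
    (hq_top : ∫⁻ t, ENNReal.ofReal (q t) = ⊤) (x : ℝ) :
    0 < dq q x ∧ ∫ t in x - dq q x..x + dq q x, q t = 2 := by
  set S := {d : ℝ | 0 < d ∧ ∫ t in x - d..x + d, q t = 2}
  have hmem : dq q x ∈ closure S :=
    csInf_mem_closure (exists_pos_integral_centered_eq hq₀ hq hq_top x two_pos)
      (⟨0, fun d hd => hd.1.le⟩ : BddBelow S)
  have hclosed : IsClosed {d : ℝ | 0 ≤ d ∧ ∫ t in x - d..x + d, q t = 2} :=
    isClosed_Ici.inter (isClosed_eq (continuous_integral_centered hq x) continuous_const)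
  have hsub : S ⊆ {d : ℝ | 0 ≤ d ∧ ∫ t in x - d..x + d, q t = 2} := fun d hd => ⟨hd.1.le, hd.2⟩
  obtain ⟨hd, hd2⟩ := closure_minimal hsub hclosed hmem
  refine ⟨hd.lt_of_ne ?_, hd2⟩
  intro h
  simp [← h] at hd2

lemma two_le_integral_of_forall_dq_le (hq₀ : ∀ t, 0 ≤ q t) (hq : LocallyIntegrable q volume)
    (hq_top : ∫⁻ t, ENNReal.ofReal (q t) = ⊤) {d₀ : ℝ} (hd₀ : ∀ z, dq q z ≤ d₀) (x : ℝ) :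
    2 ≤ ∫ t in x..x + 2 * d₀, q t := by
  obtain ⟨hpos, hint⟩ := dq_pos_and_integral_eq hq₀ hq hq_top (x + d₀)
  have hle := hd₀ (x + d₀)
  calc 2 = _ := hint.symm
    _ ≤ ∫ t in x..x + 2 * d₀, q t :=
      intervalIntegral.integral_mono_interval (by linarith) (by linarith) (by linarith)
        (.of_forall hq₀) (hq.intervalIntegrable _ _)

end

lemma div_one_sub_exp_le_inv {lam d : ℝ} (hlam : 0 < lam) (hd : 0 < d) :
    (1 - Real.exp (-(lam * (2 * d)))) / (lam * (1 - Real.exp (-(2 + 2 * lam * d)))) ≤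
      (lam + Real.exp (-2 - 2 * lam * d) / d)⁻¹ := by
  set s := Real.exp (-(lam * (2 * d)))
  set r := Real.exp (-2 - 2 * lam * d)
  have hs : 0 < s := Real.exp_pos _
  have hrs : r = Real.exp (-2) * s := by simp only [r, s, ← Real.exp_add]; ring_nf
  have hr : r < 1 := Real.exp_lt_one_iff.2 (by nlinarith)
  have h1s : 1 - s ≤ lam * (2 * d) := by linarith [Real.add_one_le_exp (-(lam * (2 * d)))]
  have he : 3 * Real.exp (-2) ≤ 1 := by
    rw [Real.exp_neg, ← div_eq_mul_inv, div_le_one (Real.exp_pos 2)]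
    linarith [Real.add_one_le_exp 2]
  rw [neg_add', show (lam + r / d)⁻¹ = d / (lam * d + r) by field_simp,
    div_le_div_iff₀ (by nlinarith) (by positivity)]
  rw [hrs] at hr ⊢
  nlinarith [mul_nonneg (sub_nonneg.2 h1s) (mul_pos (Real.exp_pos (-2)) hs).le,
    mul_nonneg (sub_nonneg.2 he) (mul_pos (mul_pos hlam hd) hs).le]

theorem stmt18 (q : ℝ → ℝ) (hq : ∀ x, 0 ≤ q x)
    (hqloc : LocallyIntegrable q volume)
    (hqint : ∫⁻ x : ℝ, ENNReal.ofReal (q x) = ⊤)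
    (hd0 : BddAbove (Set.range (dq q)))
    (lam : ℝ) (hlam : 0 < lam) :
    (∀ x : ℝ,
      (∫⁻ t in Set.Ioi x, ENNReal.ofReal (Real.exp (-∫ ξ in x..t, (q ξ + lam)))) ≤
        ENNReal.ofReal
          ((lam + Real.exp (-2 - 2 * lam * (⨆ z : ℝ, dq q z)) /
              (⨆ z : ℝ, dq q z))⁻¹)) ∧
    (⨆ x : ℝ,
        ∫⁻ t in Set.Ioi x, ENNReal.ofReal (Real.exp (-∫ ξ in x..t, (q ξ + lam)))) <
      ENNReal.ofReal (1 / lam) := by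
  set d₀ := ⨆ z : ℝ, dq q z
  have hdq_le : ∀ z, dq q z ≤ d₀ := le_ciSup hd0
  have hd₀ : 0 < d₀ := (dq_pos_and_integral_eq hq hqloc hqint 0).1.trans_le (hdq_le 0)
  have hperiod : ∀ t, 2 + 2 * lam * d₀ ≤ ∫ ξ in t..t + 2 * d₀, (q ξ + lam) := by
    intro t
    rw [intervalIntegral.integral_add (hqloc.intervalIntegrable _ _) intervalIntegrable_const,
      intervalIntegral.integral_const, smul_eq_mul, add_sub_cancel_left]
    linarith [two_le_integral_of_forall_dq_le hq hqloc hqint hdq_le t]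
  have hbound : ∀ x : ℝ,
      ∫⁻ t in Ioi x, ENNReal.ofReal (Real.exp (-∫ ξ in x..t, (q ξ + lam))) ≤
        ENNReal.ofReal ((lam + Real.exp (-2 - 2 * lam * d₀) / d₀)⁻¹) := fun x =>
    (lintegral_exp_neg_integral_le (hqloc.add (locallyIntegrable_const lam)) hlam
      (by positivity) (by positivity) (fun t => le_add_of_nonneg_left (hq t)) hperiod x).trans
      (ENNReal.ofReal_le_ofReal (div_one_sub_exp_le_inv hlam hd₀))
  refine ⟨hbound, (iSup_le hbound).trans_lt ((ENNReal.ofReal_lt_ofReal_iff (by positivity)).2 ?_)⟩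
  rw [one_div]
  exact inv_strictAnti₀ hlam (lt_add_of_pos_right lam (by positivity))
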